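/- Let F : ℝ^d → ℝ be L-smooth, let δ ∈ (0,1), σ > 0, b > 0, ε > 0, and let 0 < η_H ≤ 1/(2^{12} L log(4/δ)). Set D̄ = σ²/(4 b² L²) and let r satisfy 0 < r ≤ min{ log(4/δ)² η_H σ² / (4 b² ε), √(2 log(4/δ)² η_H σ² / (b² L)) }. Let m < T be natural numbers with T − m ≥ 2, and let x_m, x_{m+1}, …, x_T ∈ ℝ^d be a sequence such that: (i) x_{m+1} = x_m + ξ for some ξ with ‖ξ‖₂ ≤ r, and there is d_m ∈ ℝ^d with ‖d_m‖₂ ≤ ε and ‖d_m − ∇F(x_m)‖₂ ≤ ε/2; (ii) for every i with m < i < T, x_{i+1} = x_i − η_i d_i with 0 < η_i ≤ η_H and ‖d_i − ∇F(x_i)‖₂ ≤ 2^{10} log(4/δ) σ / b; (iii) ∑_{i=m+1}^{T−1} ‖x_{i+1} − x_i‖₂² ≥ (T − m − 1) D̄. Then F(x_m) − F(x_T) ≥ (T − m) log(4/δ)² η_H σ² / b². -/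

import Mathlib

/-!
Write `C = log(4/δ)² η_H σ² / b²`. By the descent lemma for an `L`-smooth function, the
perturbation step raises `F` by at most `‖∇F(x_m)‖ r + L r²/2 ≤ 11C/8`, and an inexact gradient
step `x' = x - η d` with `η ≤ η_H`, `L η_H ≤ 1/2` and gradient error at most `G` lowers `F` by at
least `‖x' - x‖² / (4η_H) - η_H G²/2`. Summing over the escape phase and inserting the lower bound
`(T - m - 1) D̄` on the movement, the choice of `η_H` makes `D̄ / (4η_H)` exceed the error term
`η_H G²/2 = 2¹⁹ C` by at least `2¹⁹ C` per step, which pays for the perturbation and leaves `C` per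
step.
-/

open Finset Gradient RealInnerProductSpace

section LipschitzGradient

variable {E : Type*} [NormedAddCommGroup E] [InnerProductSpace ℝ E] [CompleteSpace E]
  {f : E → ℝ} {L : ℝ}

theorem hasDerivAt_comp_add_smul (hf : Differentiable ℝ f) (x v : E) (t : ℝ) :
    HasDerivAt (fun s : ℝ => f (x + s • v)) ⟪∇ f (x + t • v), v⟫ t := by
  have hline : HasDerivAt (fun s : ℝ => x + s • v) v t := by
    simpa using ((hasDerivAt_id t).smul_const v).const_add x
  rw [inner_gradient_left]
  exact (hf _).hasFDerivAt.comp_hasDerivAt t hline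

theorem apply_add_le_of_lipschitz_gradient (hf : Differentiable ℝ f)
    (hlip : ∀ u v, ‖∇ f u - ∇ f v‖ ≤ L * ‖u - v‖) (x v : E) :
    f (x + v) ≤ f x + ⟪∇ f x, v⟫ + L / 2 * ‖v‖ ^ 2 := by
  set h : ℝ → ℝ := fun t => f (x + t • v) - t * ⟪∇ f x, v⟫ - L / 2 * t ^ 2 * ‖v‖ ^ 2
  have hderiv : ∀ t, HasDerivAt h (⟪∇ f (x + t • v) - ∇ f x, v⟫ - L * t * ‖v‖ ^ 2) t := by
    intro t
    refine (((hasDerivAt_comp_add_smul hf x v t).sub ((hasDerivAt_id t).mul_const _)).sub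
      (((hasDerivAt_pow 2 t).const_mul (L / 2)).mul_const (‖v‖ ^ 2))).congr_deriv ?_
    rw [inner_sub_left]
    push_cast
    ring
  have hanti : AntitoneOn h (Set.Icc 0 1) := by
    refine antitoneOn_of_hasDerivWithinAt_nonpos (convex_Icc 0 1)
      (HasDerivAt.continuousOn fun t _ => hderiv t) (fun t _ => (hderiv t).hasDerivWithinAt) ?_
    intro t ht
    rw [interior_Icc] at ht
    have : ⟪∇ f (x + t • v) - ∇ f x, v⟫ ≤ L * t * ‖v‖ ^ 2 := calc
      _ ≤ ‖∇ f (x + t • v) - ∇ f x‖ * ‖v‖ := real_inner_le_norm _ _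
      _ ≤ L * ‖t • v‖ * ‖v‖ := by gcongr; simpa using hlip (x + t • v) x
      _ = L * t * ‖v‖ ^ 2 := by rw [norm_smul, Real.norm_of_nonneg ht.1.le]; ring
    linarith
  have := hanti (Set.left_mem_Icc.2 zero_le_one) (Set.right_mem_Icc.2 zero_le_one) zero_le_one
  simp only [h, one_smul, one_mul, one_pow, zero_smul, add_zero, zero_mul, zero_pow two_ne_zero,
    mul_zero, sub_zero] at this
  linarith

theorem apply_add_sub_le_of_lipschitz_gradient (hf : Differentiable ℝ f)
    (hlip : ∀ u v, ‖∇ f u - ∇ f v‖ ≤ L * ‖u - v‖) (x v : E) :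
    f (x + v) - f x ≤ ‖∇ f x‖ * ‖v‖ + L / 2 * ‖v‖ ^ 2 := by
  linarith [apply_add_le_of_lipschitz_gradient hf hlip x v, real_inner_le_norm (∇ f x) v]

theorem le_apply_sub_apply_sub_smul (hf : Differentiable ℝ f)
    (hlip : ∀ u v, ‖∇ f u - ∇ f v‖ ≤ L * ‖u - v‖) {x d : E} {η G : ℝ} (hη : 0 ≤ η)
    (hLη : L * η ≤ 1 / 2) (herr : ‖d - ∇ f x‖ ≤ G) :
    η / 4 * ‖d‖ ^ 2 - η / 2 * G ^ 2 ≤ f x - f (x - η • d) := by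
  have hdesc := apply_add_le_of_lipschitz_gradient hf hlip x (-(η • d))
  rw [← sub_eq_add_neg, inner_neg_right, real_inner_smul_right, norm_neg, norm_smul,
    Real.norm_of_nonneg hη] at hdesc
  have hcorr : ‖d‖ ^ 2 - G * ‖d‖ ≤ ⟪∇ f x, d⟫ := by
    have : ⟪d - ∇ f x, d⟫ ≤ G * ‖d‖ :=
      (real_inner_le_norm _ _).trans (mul_le_mul_of_nonneg_right herr (norm_nonneg d))
    rw [inner_sub_left, real_inner_self_eq_norm_sq] at this
    linarith
  -- `G ‖d‖ ≤ ‖d‖²/2 + G²/2` and `L η² ‖d‖²/2 ≤ η ‖d‖²/4`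
  linarith [mul_le_mul_of_nonneg_left hcorr hη, mul_nonneg hη (sq_nonneg (‖d‖ - G)),
    mul_le_mul_of_nonneg_right hLη (mul_nonneg hη (sq_nonneg ‖d‖))]

theorem norm_sub_sq_div_sub_le_apply_sub (hf : Differentiable ℝ f)
    (hlip : ∀ u v, ‖∇ f u - ∇ f v‖ ≤ L * ‖u - v‖) (hL : 0 ≤ L) {x x' d : E} {η ηH G : ℝ}
    (hx' : x' = x - η • d) (hη : 0 < η) (hηH : η ≤ ηH) (hLηH : L * ηH ≤ 1 / 2)
    (herr : ‖d - ∇ f x‖ ≤ G) :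
    ‖x' - x‖ ^ 2 / (4 * ηH) - ηH / 2 * G ^ 2 ≤ f x - f x' := by
  subst hx'
  have hstep := le_apply_sub_apply_sub_smul hf hlip hη.le
    ((mul_le_mul_of_nonneg_left hηH hL).trans hLηH) herr
  have hmove : ‖x - η • d - x‖ ^ 2 = η ^ 2 * ‖d‖ ^ 2 := by
    rw [sub_sub_cancel_left, norm_neg, norm_smul, Real.norm_of_nonneg hη.le, mul_pow]
  have hshrink : η ^ 2 * ‖d‖ ^ 2 / (4 * ηH) ≤ η / 4 * ‖d‖ ^ 2 := by
    rw [div_le_iff₀ (by linarith)]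
    linarith [mul_le_mul_of_nonneg_left hηH (mul_nonneg hη.le (sq_nonneg ‖d‖))]
  rw [hmove]
  linarith [mul_le_mul_of_nonneg_right hηH (sq_nonneg G)]

theorem sum_norm_sub_sq_div_sub_le_apply_sub (hf : Differentiable ℝ f)
    (hlip : ∀ u v, ‖∇ f u - ∇ f v‖ ≤ L * ‖u - v‖) (hL : 0 ≤ L) {x d : ℕ → E} {η : ℕ → ℝ}
    {a T : ℕ} {ηH G : ℝ} (haT : a ≤ T) (hLηH : L * ηH ≤ 1 / 2)
    (hupd : ∀ i ∈ Ico a T, x (i + 1) = x i - η i • d i)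
    (hstep : ∀ i ∈ Ico a T, 0 < η i ∧ η i ≤ ηH)
    (herr : ∀ i ∈ Ico a T, ‖d i - ∇ f (x i)‖ ≤ G) :
    (∑ i ∈ Ico a T, ‖x (i + 1) - x i‖ ^ 2) / (4 * ηH) - (T - a : ℕ) * (ηH / 2 * G ^ 2)
      ≤ f (x a) - f (x T) := by
  have hsum := sum_le_sum fun i hi => norm_sub_sq_div_sub_le_apply_sub hf hlip hL (hupd i hi)
    (hstep i hi).1 (hstep i hi).2 hLηH (herr i hi)
  rw [sum_sub_distrib, ← sum_div, sum_const, Nat.card_Ico, nsmul_eq_mul] at hsum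
  have htel : ∑ i ∈ Ico a T, (f (x i) - f (x (i + 1))) = f (x a) - f (x T) := by
    rw [← neg_sub, ← sum_Ico_sub (fun i => f (x i)) haT, ← sum_neg_distrib]
    simp only [neg_sub]
  rwa [htel] at hsum

theorem mul_le_apply_sub_of_le_sum_norm_sub_sq (hf : Differentiable ℝ f)
    (hlip : ∀ u v, ‖∇ f u - ∇ f v‖ ≤ L * ‖u - v‖) (hL : 0 ≤ L) {x d : ℕ → E} {η : ℕ → ℝ}
    {a T : ℕ} {ηH G D c : ℝ} (haT : a ≤ T) (hηH : 0 < ηH) (hLηH : L * ηH ≤ 1 / 2)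
    (hupd : ∀ i ∈ Ico a T, x (i + 1) = x i - η i • d i)
    (hstep : ∀ i ∈ Ico a T, 0 < η i ∧ η i ≤ ηH)
    (herr : ∀ i ∈ Ico a T, ‖d i - ∇ f (x i)‖ ≤ G)
    (hmove : (T - a : ℕ) * D ≤ ∑ i ∈ Ico a T, ‖x (i + 1) - x i‖ ^ 2)
    (hbudget : ηH / 2 * G ^ 2 + c ≤ D / (4 * ηH)) :
    (T - a : ℕ) * c ≤ f (x a) - f (x T) := by
  have hdesc := sum_norm_sub_sq_div_sub_le_apply_sub hf hlip hL haT hLηH hupd hstep herr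
  have hmove_div := div_le_div_of_nonneg_right hmove (by positivity : (0 : ℝ) ≤ 4 * ηH)
  rw [mul_div_assoc] at hmove_div
  linarith [mul_le_mul_of_nonneg_left hbudget (Nat.cast_nonneg (T - a) : (0 : ℝ) ≤ (T - a : ℕ))]

theorem apply_add_sub_le_of_norm_le (hf : Differentiable ℝ f)
    (hlip : ∀ u v, ‖∇ f u - ∇ f v‖ ≤ L * ‖u - v‖) (hL : 0 < L) {x d ξ : E} {ε C : ℝ}
    (hε : 0 < ε) (hd : ‖d‖ ≤ ε) (hderr : ‖d - ∇ f x‖ ≤ ε / 2) (hξε : ‖ξ‖ ≤ C / (4 * ε))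
    (hξL : ‖ξ‖ ≤ √(2 * C / L)) :
    f (x + ξ) - f x ≤ 11 / 8 * C := by
  have hgrad : ‖∇ f x‖ ≤ 3 * ε / 2 := by
    have := norm_sub_le d (d - ∇ f x)
    rw [sub_sub_cancel] at this
    linarith
  have hC : 0 ≤ C := by
    have := (le_div_iff₀ (by positivity)).1 ((norm_nonneg ξ).trans hξε)
    linarith
  have hlin : ‖∇ f x‖ * ‖ξ‖ ≤ 3 / 8 * C := calc
    _ ≤ 3 * ε / 2 * (C / (4 * ε)) := mul_le_mul hgrad hξε (norm_nonneg _) (by positivity)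
    _ = 3 / 8 * C := by field_simp; ring
  have hquad : L / 2 * ‖ξ‖ ^ 2 ≤ C := calc
    _ ≤ L / 2 * (2 * C / L) := by
      gcongr
      exact (Real.le_sqrt (norm_nonneg _) (by positivity)).1 hξL
    _ = C := by field_simp
  linarith [apply_add_sub_le_of_lipschitz_gradient hf hlip x ξ]

end LipschitzGradient

theorem one_lt_log_four_div {δ : ℝ} (h0 : 0 < δ) (h1 : δ ≤ 1) : 1 < Real.log (4 / δ) := by
  have h4 : (4 : ℝ) ≤ 4 / δ := by rw [le_div_iff₀ h0]; linarith
  rw [Real.lt_log_iff_exp_lt (by linarith)]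
  linarith [Real.exp_one_lt_d9]

theorem noise_add_le_movement_div {L A ηH σ b : ℝ} (hL : 0 < L) (hηH : 0 < ηH) (hb : 0 < b)
    (hA : 0 ≤ A) (hLA : 2 ^ 12 * L * A * ηH ≤ 1) :
    ηH / 2 * (2 ^ 10 * A * σ / b) ^ 2 + 2 ^ 19 * (A ^ 2 * ηH * σ ^ 2 / b ^ 2)
      ≤ σ ^ 2 / (4 * b ^ 2 * L ^ 2) / (4 * ηH) := by
  have hsq : (2 ^ 12 * L * A * ηH) ^ 2 ≤ 1 := pow_le_one₀ (by positivity) hLA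
  rw [← sub_nonneg]
  have hgap : σ ^ 2 / (4 * b ^ 2 * L ^ 2) / (4 * ηH)
      - (ηH / 2 * (2 ^ 10 * A * σ / b) ^ 2 + 2 ^ 19 * (A ^ 2 * ηH * σ ^ 2 / b ^ 2))
      = σ ^ 2 / (16 * b ^ 2 * L ^ 2 * ηH) * (1 - (2 ^ 12 * L * A * ηH) ^ 2) := by
    field_simp
    ring
  rw [hgap]
  exact mul_nonneg (by positivity) (by linarith)

theorem localization_storm_general
    {dim : ℕ} (F : EuclideanSpace ℝ (Fin dim) → ℝ) (L : ℝ)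
    (hdiff : Differentiable ℝ F)
    (hlip : ∀ u v, ‖gradient F u - gradient F v‖ ≤ L * ‖u - v‖)
    (δ σ b ε ηH Dbar r : ℝ)
    (hδ : δ ∈ Set.Ioo (0 : ℝ) 1) (hb : 0 < b) (hε : 0 < ε)
    (hηH0 : 0 < ηH) (hηH : ηH ≤ 1 / (2 ^ 12 * L * Real.log (4 / δ)))
    (hDbar : Dbar = σ ^ 2 / (4 * b ^ 2 * L ^ 2))
    (hr : r ≤ min (Real.log (4 / δ) ^ 2 * ηH * σ ^ 2 / (4 * b ^ 2 * ε))
        (Real.sqrt (2 * Real.log (4 / δ) ^ 2 * ηH * σ ^ 2 / (b ^ 2 * L))))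
    (m T : ℕ) (hTm : 2 ≤ T - m)
    (x : ℕ → EuclideanSpace ℝ (Fin dim))
    (d : ℕ → EuclideanSpace ℝ (Fin dim)) (η : ℕ → ℝ)
    (ξ : EuclideanSpace ℝ (Fin dim)) (hξ : ‖ξ‖ ≤ r)
    (hpert : x (m + 1) = x m + ξ)
    (hdm : ‖d m‖ ≤ ε) (hdmerr : ‖d m - gradient F (x m)‖ ≤ ε / 2)
    (hupd : ∀ i, m < i → i < T → x (i + 1) = x i - η i • d i)
    (hstep : ∀ i, m < i → i < T → 0 < η i ∧ η i ≤ ηH)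
    (herr : ∀ i, m < i → i < T →
      ‖d i - gradient F (x i)‖ ≤ 2 ^ 10 * Real.log (4 / δ) * σ / b)
    (hmove : ((T - m - 1 : ℕ) : ℝ) * Dbar ≤
      ∑ i ∈ Finset.Ico (m + 1) T, ‖x (i + 1) - x i‖ ^ 2) :
    ((T - m : ℕ) : ℝ) * Real.log (4 / δ) ^ 2 * ηH * σ ^ 2 / b ^ 2 ≤ F (x m) - F (x T) := by
  set A := Real.log (4 / δ)
  have hA : 1 < A := one_lt_log_four_div hδ.1 hδ.2.le
  have hLA_pos : 0 < 2 ^ 12 * L * A := one_div_pos.1 (hηH0.trans_le hηH)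
  have hL : 0 < L := by nlinarith
  have hLA : 2 ^ 12 * L * A * ηH ≤ 1 := (le_div_iff₀' hLA_pos).1 hηH
  set C := A ^ 2 * ηH * σ ^ 2 / b ^ 2
  have hcost : F (x (m + 1)) - F (x m) ≤ 11 / 8 * C := by
    rw [hpert]
    exact apply_add_sub_le_of_norm_le hdiff hlip hL hε hdm hdmerr
      (hξ.trans ((hr.trans (min_le_left _ _)).trans_eq (by ring)))
      (hξ.trans ((hr.trans (min_le_right _ _)).trans_eq (by congr 1; ring)))
  rw [Nat.sub_sub] at hmove
  have hescape : ((T - (m + 1) : ℕ) : ℝ) * (2 ^ 19 * C) ≤ F (x (m + 1)) - F (x T) :=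
    mul_le_apply_sub_of_le_sum_norm_sub_sq hdiff hlip hL.le (by omega) hηH0
      (by nlinarith) (fun i hi => hupd i (mem_Ico.1 hi).1 (mem_Ico.1 hi).2)
      (fun i hi => hstep i (mem_Ico.1 hi).1 (mem_Ico.1 hi).2)
      (fun i hi => herr i (mem_Ico.1 hi).1 (mem_Ico.1 hi).2) hmove
      (hDbar ▸ noise_add_le_movement_div hL hηH0 hb (by linarith) hLA)
  set k : ℝ := ((T - (m + 1) : ℕ) : ℝ)
  have hk : 1 ≤ k := Nat.one_le_cast.2 (by omega)
  calc ((T - m : ℕ) : ℝ) * A ^ 2 * ηH * σ ^ 2 / b ^ 2 = (k + 1) * C := by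
        rw [show T - m = T - (m + 1) + 1 by omega, Nat.cast_succ]; ring
    _ ≤ k * (2 ^ 19 * C) - 11 / 8 * C := by nlinarith [show 0 ≤ C by positivity]
    _ ≤ F (x m) - F (x T) := by linarith

/-- Localization lemma for LENA-STORM: if the escape phase starting at step `m` with a
perturbation of radius `r` breaks at step `T` (so that the accumulated squared movement is
at least `(T − m − 1) D̄` with `D̄ = σ²/(4b²L²)`), then the function value decreases by at
least `(T − m) log(4/δ)² η_H σ² / b²`. -/
theorem localization_storm
    {dim : ℕ} (F : EuclideanSpace ℝ (Fin dim) → ℝ) (L : ℝ)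
    (hdiff : Differentiable ℝ F)
    (hlip : ∀ u v, ‖gradient F u - gradient F v‖ ≤ L * ‖u - v‖)
    (δ σ b ε ηH Dbar r : ℝ)
    (hδ : δ ∈ Set.Ioo (0 : ℝ) 1) (hσ : 0 < σ) (hb : 0 < b) (hε : 0 < ε)
    (hηH0 : 0 < ηH) (hηH : ηH ≤ 1 / (2 ^ 12 * L * Real.log (4 / δ)))
    (hDbar : Dbar = σ ^ 2 / (4 * b ^ 2 * L ^ 2))
    (hr0 : 0 < r)
    (hr : r ≤ min (Real.log (4 / δ) ^ 2 * ηH * σ ^ 2 / (4 * b ^ 2 * ε))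
        (Real.sqrt (2 * Real.log (4 / δ) ^ 2 * ηH * σ ^ 2 / (b ^ 2 * L))))
    (m T : ℕ) (hmT : m < T) (hTm : 2 ≤ T - m)
    (x : ℕ → EuclideanSpace ℝ (Fin dim))
    (d : ℕ → EuclideanSpace ℝ (Fin dim)) (η : ℕ → ℝ)
    (ξ : EuclideanSpace ℝ (Fin dim)) (hξ : ‖ξ‖ ≤ r)
    (hpert : x (m + 1) = x m + ξ)
    (hdm : ‖d m‖ ≤ ε) (hdmerr : ‖d m - gradient F (x m)‖ ≤ ε / 2)
    (hupd : ∀ i, m < i → i < T → x (i + 1) = x i - η i • d i)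
    (hstep : ∀ i, m < i → i < T → 0 < η i ∧ η i ≤ ηH)
    (herr : ∀ i, m < i → i < T →
      ‖d i - gradient F (x i)‖ ≤ 2 ^ 10 * Real.log (4 / δ) * σ / b)
    (hmove : ((T - m - 1 : ℕ) : ℝ) * Dbar ≤
      ∑ i ∈ Finset.Ico (m + 1) T, ‖x (i + 1) - x i‖ ^ 2) :
    ((T - m : ℕ) : ℝ) * Real.log (4 / δ) ^ 2 * ηH * σ ^ 2 / b ^ 2 ≤ F (x m) - F (x T) :=
  localization_storm_general F L hdiff hlip δ σ b ε ηH Dbar r hδ hb hε hηH0 hηH hDbar hr m T hTm x d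
    η ξ hξ hpert hdm hdmerr hupd hstep herr hmove
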